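/- (Corollary 1: the mean-squared-error loss bounds the Lagrangian loss.) Let E be a real inner product space (e.g. E = ℝⁿ), let N ≥ 1, and for each i = 1, …, N let u_i* ∈ E and f_i : E → ℝ be twice differentiable on the closed ball B(u_i*, ρ) (ρ > 0) such that ∇f_i(u_i*) = 0, the Hessian of f_i is M_H,i-Lipschitz on B(u_i*, ρ), and the gradient of f_i is M_J,i-Lipschitz on B(u_i*, ρ). Let M_Hs = max_i M_H,i, M_Js = max_i M_J,i, let 0 < ε ≤ ρ, and let u_1, …, u_N ∈ E satisfy ‖u_i − u_i*‖ ≤ ε for all i. Then (1/N) Σ_{i=1}^N |f_i(u_i) − f_i(u_i*)| ≤ (M_Js/2) · (1/N) Σ_{i=1}^N ‖u_i − u_i*‖² + (M_Hs/6)ε³. -/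

import Mathlib

/-!
Along the segment `γ t = u* + t • (u - u*)` the derivative of `t ↦ f (γ t)` is
`⟪∇f (γ t), u - u*⟫`; since `∇f u* = 0` and `∇f` is `M_J`-Lipschitz it is at most
`M_J t ‖u - u*‖²`, and integrating over `[0, 1]` gives `|f u - f u*| ≤ M_J / 2 ‖u - u*‖²`
for every sample. Averaging yields the mean-squared-error term; the cubic term
`M_Hs ε³ / 6` is nonnegative.
-/

open scoped RealInnerProductSpace

open Set Metric

theorem norm_image_sub_le_of_norm_deriv_le_mul_sub {F : Type*} [NormedAddCommGroup F]
    [NormedSpace ℝ F] {φ φ' : ℝ → F} {a b C : ℝ}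
    (hφ : ∀ t ∈ Icc a b, HasDerivWithinAt φ (φ' t) (Icc a b) t)
    (bound : ∀ t ∈ Ico a b, ‖φ' t‖ ≤ C * (t - a)) (hab : a ≤ b) :
    ‖φ b - φ a‖ ≤ C / 2 * (b - a) ^ 2 := by
  have hB : ∀ t, HasDerivAt (fun t => C / 2 * (t - a) ^ 2) (C * (t - a)) t := fun t =>
    ((((hasDerivAt_id' t).sub_const a).pow 2).const_mul (C / 2)).congr_deriv (by push_cast; ring)
  refine image_norm_le_of_norm_deriv_right_le_deriv_boundary (f := fun t => φ t - φ a)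
    (fun t ht => ((hφ t ht).sub_const (φ a)).continuousWithinAt)
    (fun t ht => ((hφ t (Ico_subset_Icc_self ht)).sub_const (φ a)).mono_of_mem_nhdsWithin
      (Icc_mem_nhdsGE_of_mem ht))
    (by simp) hB bound ⟨hab, le_rfl⟩

theorem Convex.norm_image_sub_le_of_norm_hasFDerivWithin_le_mul_norm_sub {E F : Type*}
    [NormedAddCommGroup E] [NormedSpace ℝ E] [NormedAddCommGroup F] [NormedSpace ℝ F]
    {f : E → F} {f' : E → E →L[ℝ] F} {s : Set E} {a u : E} {L : ℝ} (hs : Convex ℝ s)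
    (ha : a ∈ s) (hu : u ∈ s) (hf : ∀ x ∈ s, HasFDerivWithinAt f (f' x) s x)
    (bound : ∀ x ∈ s, ‖f' x‖ ≤ L * ‖x - a‖) :
    ‖f u - f a‖ ≤ L / 2 * ‖u - a‖ ^ 2 := by
  set v := u - a
  set γ : ℝ → E := fun t => a + t • v
  have hγs : MapsTo γ (Icc 0 1) s := fun t ht => hs.add_smul_sub_mem ha hu ht
  have hγ : ∀ t, HasDerivAt γ v t := fun t => by
    simpa [γ] using ((hasDerivAt_id t).smul_const v).const_add a
  have hφ : ∀ t ∈ Icc (0 : ℝ) 1, HasDerivWithinAt (f ∘ γ) (f' (γ t) v) (Icc 0 1) t :=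
    fun t ht => (hf (γ t) (hγs ht)).comp_hasDerivWithinAt t (hγ t).hasDerivWithinAt hγs
  have bound_φ : ∀ t ∈ Ico (0 : ℝ) 1, ‖f' (γ t) v‖ ≤ L * ‖v‖ ^ 2 * (t - 0) := fun t ht => by
    have hγa : ‖γ t - a‖ = t * ‖v‖ := by simp [γ, norm_smul, abs_of_nonneg ht.1]
    calc ‖f' (γ t) v‖ ≤ ‖f' (γ t)‖ * ‖v‖ := (f' (γ t)).le_opNorm v
      _ ≤ L * ‖γ t - a‖ * ‖v‖ := by gcongr; exact bound _ (hγs (Ico_subset_Icc_self ht))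
      _ = L * ‖v‖ ^ 2 * (t - 0) := by rw [hγa]; ring
  have key := norm_image_sub_le_of_norm_deriv_le_mul_sub hφ bound_φ zero_le_one
  simpa [γ, v, mul_div_right_comm] using key

theorem Convex.abs_image_sub_le_of_hasGradientWithin_of_gradient_eq_zero {E : Type*}
    [NormedAddCommGroup E] [InnerProductSpace ℝ E] [CompleteSpace E]
    {f : E → ℝ} {g : E → E} {s : Set E} {a u : E} {L : ℝ} (hs : Convex ℝ s)
    (ha : a ∈ s) (hu : u ∈ s) (hf : ∀ x ∈ s, HasGradientWithinAt f (g x) s x)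
    (hga : g a = 0) (hLip : ∀ x ∈ s, ‖g x - g a‖ ≤ L * ‖x - a‖) :
    |f u - f a| ≤ L / 2 * ‖u - a‖ ^ 2 :=
  hs.norm_image_sub_le_of_norm_hasFDerivWithin_le_mul_norm_sub ha hu
    (fun x hx => (hf x hx).hasFDerivWithinAt)
    (fun x hx => by simpa [hga] using hLip x hx)

theorem mse_loss_bounds_lagrangian_loss_general
    {E : Type*} [NormedAddCommGroup E] [InnerProductSpace ℝ E] [CompleteSpace E]
    (N : ℕ) (hN : 0 < N)
    (ustar : Fin N → E) (ρ : ℝ)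
    (f : Fin N → E → ℝ) (g : Fin N → E → E)
    (MH : Fin N → ℝ) (hMH : ∀ i, 0 < MH i)
    (MJ : Fin N → ℝ)
    (hg : ∀ i, ∀ x ∈ Metric.closedBall (ustar i) ρ,
      HasGradientWithinAt (f i) (g i x) (Metric.closedBall (ustar i) ρ) x)
    (hstat : ∀ i, g i (ustar i) = 0)
    (hLipJ : ∀ i, ∀ x ∈ Metric.closedBall (ustar i) ρ,
      ∀ y ∈ Metric.closedBall (ustar i) ρ, ‖g i x - g i y‖ ≤ MJ i * ‖x - y‖)
    (MHs MJs : ℝ)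
    (hMHs : MHs =
      Finset.univ.sup' (Finset.univ_nonempty_iff.mpr ⟨⟨0, hN⟩⟩) MH)
    (hMJs : MJs =
      Finset.univ.sup' (Finset.univ_nonempty_iff.mpr ⟨⟨0, hN⟩⟩) MJ)
    (ε : ℝ) (hε : 0 < ε) (hερ : ε ≤ ρ)
    (u : Fin N → E) (hu : ∀ i, ‖u i - ustar i‖ ≤ ε) :
    (1 / (N : ℝ)) * ∑ i, |f i (u i) - f i (ustar i)| ≤
      MJs / 2 * ((1 / (N : ℝ)) * ∑ i, ‖u i - ustar i‖ ^ 2) +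
        MHs / 6 * ε ^ 3 := by
  have hMHs_nonneg : 0 ≤ MHs :=
    hMHs ▸ (hMH ⟨0, hN⟩).le.trans (Finset.le_sup' MH (Finset.mem_univ _))
  have hterm : ∀ i, |f i (u i) - f i (ustar i)| ≤ MJs / 2 * ‖u i - ustar i‖ ^ 2 := fun i => by
    have hcenter : ustar i ∈ closedBall (ustar i) ρ := mem_closedBall_self (hε.le.trans hερ)
    have hui : u i ∈ closedBall (ustar i) ρ := by
      rw [mem_closedBall, dist_eq_norm]; exact (hu i).trans hερ
    calc |f i (u i) - f i (ustar i)| ≤ MJ i / 2 * ‖u i - ustar i‖ ^ 2 :=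
          (convex_closedBall _ _).abs_image_sub_le_of_hasGradientWithin_of_gradient_eq_zero
            hcenter hui (hg i) (hstat i) (fun x hx => hLipJ i x hx _ hcenter)
      _ ≤ MJs / 2 * ‖u i - ustar i‖ ^ 2 := by
          gcongr; exact hMJs ▸ Finset.le_sup' MJ (Finset.mem_univ i)
  calc (1 / (N : ℝ)) * ∑ i, |f i (u i) - f i (ustar i)|
      ≤ (1 / (N : ℝ)) * ∑ i, MJs / 2 * ‖u i - ustar i‖ ^ 2 := by
        gcongr with i; exact hterm i
    _ = MJs / 2 * ((1 / (N : ℝ)) * ∑ i, ‖u i - ustar i‖ ^ 2) := by rw [← Finset.mul_sum]; ring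
    _ ≤ _ := le_add_of_nonneg_right (by positivity)

/-- Corollary 1: the mean-squared-error loss `L_mse` bounds the Lagrangian loss
`L_lag`, via `L_lag ≤ (M_Js/2) L_mse + (M_Hs/6) ε³`, where `M_Hs = max_i M_H,i`
and `M_Js = max_i M_J,i`. -/
theorem mse_loss_bounds_lagrangian_loss
    {E : Type*} [NormedAddCommGroup E] [InnerProductSpace ℝ E] [CompleteSpace E]
    (N : ℕ) (hN : 0 < N)
    (ustar : Fin N → E) (ρ : ℝ) (hρ : 0 < ρ)
    (f : Fin N → E → ℝ) (g : Fin N → E → E) (H : Fin N → E → E →L[ℝ] E)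
    (MH : Fin N → ℝ) (hMH : ∀ i, 0 < MH i)
    (MJ : Fin N → ℝ) (hMJ : ∀ i, 0 < MJ i)
    (hg : ∀ i, ∀ x ∈ Metric.closedBall (ustar i) ρ,
      HasGradientWithinAt (f i) (g i x) (Metric.closedBall (ustar i) ρ) x)
    (hH : ∀ i, ∀ x ∈ Metric.closedBall (ustar i) ρ,
      HasFDerivWithinAt (g i) (H i x) (Metric.closedBall (ustar i) ρ) x)
    (hstat : ∀ i, g i (ustar i) = 0)
    (hLipH : ∀ i, ∀ x ∈ Metric.closedBall (ustar i) ρ,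
      ∀ y ∈ Metric.closedBall (ustar i) ρ, ‖H i x - H i y‖ ≤ MH i * ‖x - y‖)
    (hLipJ : ∀ i, ∀ x ∈ Metric.closedBall (ustar i) ρ,
      ∀ y ∈ Metric.closedBall (ustar i) ρ, ‖g i x - g i y‖ ≤ MJ i * ‖x - y‖)
    (MHs MJs : ℝ)
    (hMHs : MHs =
      Finset.univ.sup' (Finset.univ_nonempty_iff.mpr ⟨⟨0, hN⟩⟩) MH)
    (hMJs : MJs =
      Finset.univ.sup' (Finset.univ_nonempty_iff.mpr ⟨⟨0, hN⟩⟩) MJ)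
    (ε : ℝ) (hε : 0 < ε) (hερ : ε ≤ ρ)
    (u : Fin N → E) (hu : ∀ i, ‖u i - ustar i‖ ≤ ε) :
    (1 / (N : ℝ)) * ∑ i, |f i (u i) - f i (ustar i)| ≤
      MJs / 2 * ((1 / (N : ℝ)) * ∑ i, ‖u i - ustar i‖ ^ 2) +
        MHs / 6 * ε ^ 3 :=
  mse_loss_bounds_lagrangian_loss_general N hN ustar ρ f g MH hMH MJ hg hstat hLipJ MHs MJs hMHs
    hMJs ε hε hερ u hu
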